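/- arXiv:2509.21296 — 2 statements merged into one kernel-verified Lean document; each statement's English description precedes it below -/
import Mathlib

section
/- Suppose theta satisfies || theta - sum_{i=1}^n lambda_i y_i G(x_i) || <= epsilon, where G is affine on a region containing x1, z1 = x1 + alpha*nu, and z2 = x1 - beta*nu (alpha, beta > 0, lambda1 > 0). Then replacing the term lambda1 y1 G(x1) by lambda_beta y1 G(z1) + lambda_alpha y1 G(z2), with lambda_alpha = alpha*lambda1/(alpha+beta) and lambda_beta = beta*lambda1/(alpha+beta), the norm of the residual is unchanged and hence still at most epsilon. -/
/-- Approximate-KKT Split Lemma (Lemma 3.9): if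
`‖θ - ∑ i, λ i • y i • G (x i)‖ ≤ ε` and `G` is affine on a region containing
`x l`, `z₁ = x l + α • ν`, `z₂ = x l - β • ν`, then replacing the term
`λ l • y l • G (x l)` by `λ_β • y l • G z₁ + λ_α • y l • G z₂` leaves the norm
of the residual unchanged, hence still at most `ε`. -/
theorem approx_kkt_split {d m n : ℕ} (θ : EuclideanSpace ℝ (Fin m))
    (G : EuclideanSpace ℝ (Fin d) → EuclideanSpace ℝ (Fin m))
    (s : Set (EuclideanSpace ℝ (Fin d)))
    (A : EuclideanSpace ℝ (Fin d) →ₗ[ℝ] EuclideanSpace ℝ (Fin m))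
    (c : EuclideanSpace ℝ (Fin m))
    (hG : ∀ x ∈ s, G x = A x + c)
    (x : Fin n → EuclideanSpace ℝ (Fin d)) (y : Fin n → ℝ) (lam : Fin n → ℝ)
    (hy : ∀ i, y i = 1 ∨ y i = -1) (hlam : ∀ i, 0 ≤ lam i)
    (ε : ℝ) (hε : 0 < ε)
    (hres : ‖θ - ∑ i, lam i • y i • G (x i)‖ ≤ ε)
    (l : Fin n) (hlamₗ : 0 < lam l)
    (α β : ℝ) (hα : 0 < α) (hβ : 0 < β) (ν : EuclideanSpace ℝ (Fin d))
    (hxl : x l ∈ s) (hz₁ : x l + α • ν ∈ s) (hz₂ : x l - β • ν ∈ s) :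
    ‖θ - (∑ i ∈ Finset.univ.erase l, lam i • y i • G (x i) +
        (β * lam l / (α + β)) • y l • G (x l + α • ν) +
        (α * lam l / (α + β)) • y l • G (x l - β • ν))‖ =
      ‖θ - ∑ i, lam i • y i • G (x i)‖ ∧
    ‖θ - (∑ i ∈ Finset.univ.erase l, lam i • y i • G (x i) +
        (β * lam l / (α + β)) • y l • G (x l + α • ν) +
        (α * lam l / (α + β)) • y l • G (x l - β • ν))‖ ≤ ε := by
  have hab : α + β ≠ 0 := by positivity
  have key : (β * lam l / (α + β)) • y l • G (x l + α • ν) +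
      (α * lam l / (α + β)) • y l • G (x l - β • ν) = lam l • y l • G (x l) := by
    rw [hG _ hz₁, hG _ hz₂, hG _ hxl, map_add, map_sub, map_smul, map_smul]
    match_scalars <;> field_simp <;> ring
  have hsum : ∑ i ∈ Finset.univ.erase l, lam i • y i • G (x i) +
      (β * lam l / (α + β)) • y l • G (x l + α • ν) +
      (α * lam l / (α + β)) • y l • G (x l - β • ν) = ∑ i, lam i • y i • G (x i) := by
    rw [add_assoc, key, ← Finset.add_sum_erase _ _ (Finset.mem_univ l)]
    abel
  rw [hsum]
  exact ⟨rfl, hres⟩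
end

section
/- Let S = {x_1,...,x_n} be a finite subset of R^d with span(S) a proper subspace of R^d, and let Phi be a two-layer ReLU network at a KKT point with respect to S (satisfying stationarity, primal/dual feasibility, and complementary slackness, with all x_i on the margin with value p). Then for every r > 0 there exists a set S_r such that: (i) S_r is also a KKT set for the same parameters theta, (ii) min over x in S, x' in S_r of ||x - x'|| > r, and (iii) |Phi(theta; x')| = p for all x' in S_r. -/
open scoped RealInnerProductSpace

/-- The two-layer ReLU network `Φ(θ; z) = ∑ j v_j relu(⟪w_j, z⟫ + b_j)`. -/
noncomputable def twoLayerNet {d k : ℕ} (w : Fin k → EuclideanSpace ℝ (Fin d))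
    (v b : Fin k → ℝ) (z : EuclideanSpace ℝ (Fin d)) : ℝ :=
  ∑ j, v j * max 0 (⟪w j, z⟫ + b j)

/-- `x : Fin m → ℝ^d` is a KKT set for the network parameters `(w, v, b)`:
there are labels `y`, nonnegative multipliers `λ` and valid ReLU subgradients
`σ'` making the KKT stationarity equation hold exactly (componentwise over the
parameters, as in Lemma A.2). -/
def IsKKTSet {d k m : ℕ} (w : Fin k → EuclideanSpace ℝ (Fin d))
    (v b : Fin k → ℝ) (x : Fin m → EuclideanSpace ℝ (Fin d)) : Prop :=
  ∃ (y lam : Fin m → ℝ) (σ' : Fin m → Fin k → ℝ),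
    (∀ i, y i = 1 ∨ y i = -1) ∧ (∀ i, 0 ≤ lam i) ∧
    (∀ i j, σ' i j ∈ Set.Icc (0 : ℝ) 1 ∧
      (0 < ⟪w j, x i⟫ + b j → σ' i j = 1) ∧
      (⟪w j, x i⟫ + b j < 0 → σ' i j = 0)) ∧
    (∀ j, w j = v j • ∑ i, (lam i * y i * σ' i j) • x i ∧
      v j = ∑ i, lam i * y i * max 0 (⟪w j, x i⟫ + b j) ∧
      b j = v j * ∑ i, lam i * y i * σ' i j)


private lemma fin_addcases' {m n : ℕ} (i : Fin (m + n)) :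
    (∃ j : Fin m, i = Fin.castAdd n j) ∨ ∃ j : Fin n, i = Fin.natAdd m j := by
  rcases lt_or_ge (i : ℕ) m with h | h
  · exact Or.inl ⟨⟨i, h⟩, by ext; simp⟩
  · refine Or.inr ⟨⟨(i : ℕ) - m, by omega⟩, by ext; simp; omega⟩

/-- Theorem 3.5: if the training set does not span `ℝ^d`, then for every
`r > 0` there is another KKT set for the same parameters, all of whose points
are on the margin, lying at distance greater than `r` from the training set. -/
theorem kkt_set_arbitrarily_far {d k n : ℕ}
    (w : Fin k → EuclideanSpace ℝ (Fin d)) (v b : Fin k → ℝ)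
    (x : Fin n → EuclideanSpace ℝ (Fin d))
    (hKKT : IsKKTSet w v b x)
    (hspan : Submodule.span ℝ (Set.range x) ≠ ⊤)
    (p : ℝ) (hp : 0 < p)
    (hmargin : ∀ i, |twoLayerNet w v b (x i)| = p) :
    ∀ r > (0 : ℝ), ∃ (m : ℕ) (x' : Fin m → EuclideanSpace ℝ (Fin d)),
      IsKKTSet w v b x' ∧
      (∀ (i : Fin n) (i' : Fin m), ‖x i - x' i'‖ > r) ∧
      (∀ i' : Fin m, |twoLayerNet w v b (x' i')| = p) := by
  intro r hr
  obtain ⟨y, lam, σ', hy, hlam, hσ, hstat⟩ := hKKT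
  set K : Submodule ℝ (EuclideanSpace ℝ (Fin d)) := Submodule.span ℝ (Set.range x) with hK
  -- find a nonzero orthogonal vector and scale it to norm `r+1`
  have hKbot : Kᗮ ≠ ⊥ := by
    intro h
    exact hspan (Submodule.orthogonal_eq_bot_iff.mp h)
  obtain ⟨u₁, hu₁mem, hu₁ne⟩ := Submodule.exists_mem_ne_zero_of_ne_bot hKbot
  have hu₁norm : (0:ℝ) < ‖u₁‖ := norm_pos_iff.mpr hu₁ne
  set u : EuclideanSpace ℝ (Fin d) := ((r+1)/‖u₁‖) • u₁ with hu
  have humem : u ∈ Kᗮ := Submodule.smul_mem _ _ hu₁mem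
  have hunorm : ‖u‖ = r + 1 := by
    rw [hu, norm_smul, Real.norm_eq_abs, abs_div, abs_of_pos (by linarith), abs_of_pos hu₁norm,
      div_mul_cancel₀]
    exact ne_of_gt hu₁norm
  have hxK : ∀ i, x i ∈ K := fun i => Submodule.subset_span ⟨i, rfl⟩
  have hwK : ∀ j, w j ∈ K := by
    intro j
    rw [(hstat j).1]
    exact Submodule.smul_mem _ _ (Submodule.sum_mem _ fun i _ => Submodule.smul_mem _ _ (hxK i))
  have hwu : ∀ j, ⟪w j, u⟫ = 0 := fun j => humem (w j) (hwK j)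
  have hxu : ∀ i, ⟪x i, u⟫ = 0 := fun i => humem (x i) (hxK i)
  -- inner products with translated points are unchanged
  have hinnP : ∀ j i, ⟪w j, x i + u⟫ = ⟪w j, x i⟫ := by
    intro j i; rw [inner_add_right, hwu, add_zero]
  have hinnM : ∀ j i, ⟪w j, x i - u⟫ = ⟪w j, x i⟫ := by
    intro j i; rw [inner_sub_right, hwu, sub_zero]
  refine ⟨n + n, Fin.append (fun i => x i + u) (fun i => x i - u), ?_, ?_, ?_⟩
  · -- KKT set
    refine ⟨Fin.append y y, Fin.append (fun i => lam i / 2) (fun i => lam i / 2),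
      Fin.append σ' σ', ?_, ?_, ?_, ?_⟩
    · intro i
      rcases fin_addcases' i with ⟨i₀, rfl⟩ | ⟨i₀, rfl⟩
      · simp only [Fin.append_left]; exact hy i₀
      · simp only [Fin.append_right]; exact hy i₀
    · intro i
      rcases fin_addcases' i with ⟨i₀, rfl⟩ | ⟨i₀, rfl⟩
      · simp only [Fin.append_left]; linarith [hlam i₀]
      · simp only [Fin.append_right]; linarith [hlam i₀]
    · intro i j
      rcases fin_addcases' i with ⟨i₀, rfl⟩ | ⟨i₀, rfl⟩
      · simp only [Fin.append_left, hinnP]; exact hσ i₀ j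
      · simp only [Fin.append_right, hinnM]; exact hσ i₀ j
    · intro j
      obtain ⟨hw1, hw2, hw3⟩ := hstat j
      refine ⟨?_, ?_, ?_⟩
      · rw [Fin.sum_univ_add]
        simp only [Fin.append_left, Fin.append_right]
        rw [← Finset.sum_add_distrib]
        calc w j = v j • ∑ i, (lam i * y i * σ' i j) • x i := hw1
          _ = v j • ∑ i, ((lam i / 2 * y i * σ' i j) • (x i + u) +
                (lam i / 2 * y i * σ' i j) • (x i - u)) := by
              congr 1
              refine Finset.sum_congr rfl fun i _ => ?_
              rw [smul_add, smul_sub]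
              rw [show (lam i * y i * σ' i j) = (lam i / 2 * y i * σ' i j) +
                (lam i / 2 * y i * σ' i j) by ring, add_smul]
              abel
      · rw [Fin.sum_univ_add]
        simp only [Fin.append_left, Fin.append_right, hinnP, hinnM]
        rw [← Finset.sum_add_distrib]
        calc v j = ∑ i, lam i * y i * max 0 (⟪w j, x i⟫ + b j) := hw2
          _ = _ := Finset.sum_congr rfl fun i _ => by ring
      · rw [Fin.sum_univ_add]
        simp only [Fin.append_left, Fin.append_right]
        rw [← Finset.sum_add_distrib]
        calc b j = v j * ∑ i, lam i * y i * σ' i j := hw3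
          _ = _ := by
            congr 1
            exact Finset.sum_congr rfl fun i _ => by ring
  · -- distance
    intro i i'
    have key : ∀ (z : EuclideanSpace ℝ (Fin d)), ⟪z, u⟫ = 0 → r < ‖z - u‖ ∧ r < ‖z + u‖ := by
      intro z hz
      have h1 : ‖z - u‖ ^ 2 = ‖z‖ ^ 2 + ‖u‖ ^ 2 := by
        rw [norm_sub_sq_real, hz]; ring
      have h2 : ‖z + u‖ ^ 2 = ‖z‖ ^ 2 + ‖u‖ ^ 2 := by
        rw [norm_add_sq_real, hz]; ring
      have hle1 : ‖u‖ ^ 2 ≤ ‖z - u‖ ^ 2 := by rw [h1]; nlinarith [sq_nonneg ‖z‖]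
      have hle2 : ‖u‖ ^ 2 ≤ ‖z + u‖ ^ 2 := by rw [h2]; nlinarith [sq_nonneg ‖z‖]
      have g1 : ‖u‖ ≤ ‖z - u‖ := le_of_pow_le_pow_left₀ two_ne_zero (norm_nonneg _) hle1
      have g2 : ‖u‖ ≤ ‖z + u‖ := le_of_pow_le_pow_left₀ two_ne_zero (norm_nonneg _) hle2
      constructor <;> [skip; skip] <;> rw [hunorm] at g1 g2 <;> linarith
    rcases fin_addcases' i' with ⟨i₀, rfl⟩ | ⟨i₀, rfl⟩
    · simp only [Fin.append_left]
      have := (key (x i - x i₀) (by rw [inner_sub_left, hxu, hxu]; ring)).1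
      have he : x i - (x i₀ + u) = (x i - x i₀) - u := by abel
      rw [he]; exact this
    · simp only [Fin.append_right]
      have := (key (x i - x i₀) (by rw [inner_sub_left, hxu, hxu]; ring)).2
      have he : x i - (x i₀ - u) = (x i - x i₀) + u := by abel
      rw [he]; exact this
  · -- margin
    intro i'
    have hnet : ∀ z : EuclideanSpace ℝ (Fin d), (∀ j, ⟪w j, z⟫ = 0) →
        ∀ i, twoLayerNet w v b (x i + z) = twoLayerNet w v b (x i) ∧
          twoLayerNet w v b (x i - z) = twoLayerNet w v b (x i) := by
      intro z hz i
      constructor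
      · unfold twoLayerNet
        refine Finset.sum_congr rfl fun j _ => ?_
        rw [show ⟪w j, x i + z⟫ = ⟪w j, x i⟫ from by rw [inner_add_right, hz, add_zero]]
      · unfold twoLayerNet
        refine Finset.sum_congr rfl fun j _ => ?_
        rw [show ⟪w j, x i - z⟫ = ⟪w j, x i⟫ from by rw [inner_sub_right, hz, sub_zero]]
    rcases fin_addcases' i' with ⟨i₀, rfl⟩ | ⟨i₀, rfl⟩
    · simp only [Fin.append_left]
      rw [(hnet u hwu i₀).1]; exact hmargin i₀
    · simp only [Fin.append_right]
      rw [(hnet u hwu i₀).2]; exact hmargin i₀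
end
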